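/- For every ε > 0 there exists a finite simple connected graph G such that cdim(G) / mdim(G) ≤ ε. Concretely, the threshold graph G of order n ≥ 3 generated by the alternating sequence 0,1,0,1,…,0,1 satisfies cdim(G) = 2 while its metric dimension m = mdim(G) satisfies m + 2^m ≥ n, so mdim(G) → ∞ as n → ∞. -/

import Mathlib

open SimpleGraph

namespace ConnDim

open Classical in
/-- The local connectivity `κ(a,b)`: the maximum number of internally vertex-disjoint
`a`-`b` paths, with `κ(a,a) = ∞`. -/
noncomputable def localConn {V : Type*} (G : SimpleGraph V) (a b : V) : ℕ∞ :=
  if a = b then ⊤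
  else sSup {n : ℕ∞ | ∃ Ps : Finset (G.Path a b),
    (∀ p ∈ Ps, ∀ q ∈ Ps, p ≠ q → ∀ x : V,
        x ∈ p.1.support → x ∈ q.1.support → x = a ∨ x = b) ∧
    (Ps.card : ℕ∞) = n}

/-- A set `W` is connectivity resolving if vertices are determined by their
local connectivities to the elements of `W`. -/
def ConnResolving {V : Type*} (G : SimpleGraph V) (W : Set V) : Prop :=
  ∀ u v : V, (∀ w ∈ W, localConn G u w = localConn G v w) → u = v

/-- The connectivity dimension: minimum cardinality of a connectivity resolving set. -/
noncomputable def cdim {V : Type*} (G : SimpleGraph V) : ℕ :=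
  sInf {n : ℕ | ∃ W : Set V, ConnResolving G W ∧ W.ncard = n}

/-- A set `W` is metric resolving if vertices are determined by their distances
to the elements of `W`. -/
def MetricResolving {V : Type*} (G : SimpleGraph V) (W : Set V) : Prop :=
  ∀ u v : V, (∀ w ∈ W, G.dist u w = G.dist v w) → u = v

/-- The metric dimension: minimum cardinality of a metric resolving set. -/
noncomputable def mdim {V : Type*} (G : SimpleGraph V) : ℕ :=
  sInf {n : ℕ | ∃ W : Set V, MetricResolving G W ∧ W.ncard = n}

/-- `G` forces a `𝟙` representation if every minimum resolving set (basis) `B` admits a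
vertex whose local connectivity to every element of `B` equals `1`. -/
def ForcesOne {V : Type*} (G : SimpleGraph V) : Prop :=
  ∀ B : Set V, ConnResolving G B → B.ncard = cdim G →
    ∃ v : V, ∀ b ∈ B, localConn G v b = 1

/-- A cut vertex of a connected graph: its removal disconnects the graph. -/
def IsCutVertex {V : Type*} (G : SimpleGraph V) (v : V) : Prop :=
  G.Connected ∧ ¬ (G.induce {u : V | u ≠ v}).Connected

/-- A block of `G`: a maximal connected subgraph of `G` without a cut vertex of itself. -/
def IsBlock {V : Type*} (G : SimpleGraph V) (H : G.Subgraph) : Prop :=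
  H.coe.Connected ∧ (∀ v, ¬ IsCutVertex H.coe v) ∧
  ∀ H' : G.Subgraph, H ≤ H' → H'.coe.Connected → (∀ v, ¬ IsCutVertex H'.coe v) → H' = H

/-- The number of blocks of `G`. -/
noncomputable def numBlocks {V : Type*} (G : SimpleGraph V) : ℕ :=
  Nat.card {H : G.Subgraph // IsBlock G H}

/-- Two vertices are twins if they have the same neighborhood in the graph with
both of them deleted. -/
def AreTwins {V : Type*} (G : SimpleGraph V) (a b : V) : Prop :=
  ∀ x : V, x ≠ a → x ≠ b → (G.Adj a x ↔ G.Adj b x)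

/-- The threshold graph generated by a binary sequence `L` (`false` = isolated vertex,
`true` = dominating vertex): two vertices are adjacent iff the later one was added
as a dominating vertex. -/
def thresholdGraph (L : List Bool) : SimpleGraph (Fin L.length) :=
  SimpleGraph.fromRel (fun i j => i < j ∧ L.get j = true)

/-- The alternating binary sequence `0,1,0,1,…,0,1` of length `2 * n`. -/
def altList (n : ℕ) : List Bool := (List.replicate n [false, true]).flatten

/-- The join of two graphs on disjoint vertex sets by the bridge `v₁v₂`. -/
def bridgeJoin {V₁ V₂ : Type*} (G₁ : SimpleGraph V₁) (G₂ : SimpleGraph V₂)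
    (v₁ : V₁) (v₂ : V₂) : SimpleGraph (V₁ ⊕ V₂) :=
  G₁.map Function.Embedding.inl ⊔ G₂.map Function.Embedding.inr
    ⊔ SimpleGraph.fromEdgeSet {s(Sum.inl v₁, Sum.inr v₂)}

/-- The graph obtained from `G` by attaching a new leaf (the vertex `none`) to `u`. -/
def attachLeaf {V : Type*} (G : SimpleGraph V) (u : V) : SimpleGraph (Option V) :=
  G.map Function.Embedding.some ⊔ SimpleGraph.fromEdgeSet {s(some u, (none : Option V))}

/-- The chain of `t` triangles (triangle `i` has vertices `inl i.castSucc`, `inl i.succ`,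
`inr (inl i)`), with a leaf `inr (inr ())` attached to the end vertex `inl 0`. -/
def triChain (t : ℕ) : SimpleGraph (Fin (t+1) ⊕ Fin t ⊕ Unit) :=
  SimpleGraph.fromRel (fun a b =>
    match a, b with
    | Sum.inl i, Sum.inl j => (i : ℕ) + 1 = (j : ℕ)
    | Sum.inr (Sum.inl i), Sum.inl j => j = Fin.castSucc i ∨ j = Fin.succ i
    | Sum.inr (Sum.inr _), Sum.inl j => j = 0
    | _, _ => False)

/-!
In the alternating threshold graph an odd vertex is adjacent to every earlier vertex, so the last
vertex `z` is universal. For `u ≠ z` the paths `u x z` through the neighbours `x` of `u` are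
internally disjoint, hence `κ(u, z) = deg u`. The degrees, `n - k` for `2k` and `n + k` for
`2k + 1`, separate all vertices except the twins `0, 1`, and those are separated by `0` itself,
so `{0, z}` is resolving. No single vertex `w` is: the transposition of the twins fixes `w`
unless `w ∈ {0, 1}`, and then `3` and `5` both have connectivity `deg w` to `w`.

All distances are `1` or `2`, so a vertex outside a metric basis `W` is encoded by the subset
of `W` at distance `1`, whence `2n ≤ |W| + 2 ^ |W|`.
-/

section LocalConnectivity

variable {V V' : Type*} {G : SimpleGraph V} {G' : SimpleGraph V'}

def InternallyDisjoint {u w : V} (Ps : Finset (G.Path u w)) : Prop :=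
  ∀ p ∈ Ps, ∀ q ∈ Ps, p ≠ q → ∀ x : V,
    x ∈ p.1.support → x ∈ q.1.support → x = u ∨ x = w

lemma localConn_self (a : V) : localConn G a a = ⊤ := if_pos rfl

lemma localConn_of_ne {u w : V} (h : u ≠ w) :
    localConn G u w = sSup {n : ℕ∞ | ∃ Ps : Finset (G.Path u w),
      InternallyDisjoint Ps ∧ (Ps.card : ℕ∞) = n} := if_neg h

lemma Path.eq_singleton_of_snd_eq {u w : V} (huw : u ≠ w) (p : G.Path u w)
    (h : p.1.snd = w) : ∃ h' : G.Adj u w, p = Path.singleton h' := by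
  obtain ⟨_ | ⟨huv, q⟩, hp⟩ := p
  · exact absurd rfl huw
  · simp only [Walk.snd_cons] at h
    subst h
    obtain rfl := Walk.isPath_iff_nil.mp hp.of_cons |>.eq_nil
    exact ⟨huv, rfl⟩

lemma InternallyDisjoint.injOn_snd {u w : V} (huw : u ≠ w) {Ps : Finset (G.Path u w)}
    (hPs : InternallyDisjoint Ps) : Set.InjOn (fun p : G.Path u w => p.1.snd) Ps := by
  intro p hp q hq hpq
  by_contra hne
  have hnil : ∀ r : G.Path u w, ¬ r.1.Nil := fun r hr => huw hr.eq
  have hsnd : ∀ r : G.Path u w, r.1.snd ∈ r.1.support := fun r =>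
    List.mem_of_mem_tail (Walk.snd_mem_tail_support (hnil r))
  have hpq : p.1.snd = q.1.snd := hpq
  rcases hPs p hp q hq hne _ (hsnd p) (hpq ▸ hsnd q) with h | h
  · exact G.irrefl (h ▸ Walk.adj_snd (hnil p))
  · obtain ⟨_, rfl⟩ := Path.eq_singleton_of_snd_eq huw p h
    obtain ⟨_, rfl⟩ := Path.eq_singleton_of_snd_eq huw q (hpq ▸ h)
    exact hne rfl

lemma localConn_le_degree {u w : V} [Fintype (G.neighborSet u)] (huw : u ≠ w) :
    localConn G u w ≤ G.degree u := by
  rw [localConn_of_ne huw]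
  refine sSup_le ?_
  rintro _ ⟨Ps, hPs, rfl⟩
  exact_mod_cast Finset.card_le_card_of_injOn _
    (fun p _ => (G.mem_neighborFinset _ _).mpr (Walk.adj_snd fun h => huw h.eq))
    (hPs.injOn_snd huw)

lemma localConn_eq_top_iff [Finite V] {u w : V} : localConn G u w = ⊤ ↔ u = w := by
  classical
  have := Fintype.ofFinite V
  refine ⟨fun h => by_contra fun huw => ?_, fun h => h ▸ localConn_self u⟩
  exact ENat.natCast_ne_top _ (top_le_iff.mp (h ▸ localConn_le_degree huw))

open Classical in
/-- For `x = w` this is the edge `u w`, as `¬ G.Adj w w`. -/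
noncomputable def pathThrough {u w : V} (huw : G.Adj u w) (x : V) : G.Path u w :=
  if h : G.Adj u x ∧ G.Adj x w then
    ⟨.cons h.1 (.cons h.2 .nil), by simp [Walk.isPath_def, h.1.ne, h.2.ne, huw.ne]⟩
  else Path.singleton huw

lemma mem_support_pathThrough {u w x y : V} (huw : G.Adj u w)
    (hy : y ∈ (pathThrough huw x).1.support) : y = u ∨ y = x ∨ y = w := by
  unfold pathThrough at hy
  split_ifs at hy <;> simp at hy <;> tauto

lemma snd_pathThrough {u w x : V} (huw : G.Adj u w) (hux : G.Adj u x)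
    (hxw : x ≠ w → G.Adj x w) : (pathThrough huw x).1.snd = x := by
  unfold pathThrough
  by_cases hx : x = w
  · subst hx
    simp
  · simp [hux, hxw hx]

/-- The edge `u w` and the paths `u x w`, one through each other neighbour `x` of `u`, are
internally disjoint. -/
lemma localConn_eq_degree {u w : V} [Fintype (G.neighborSet u)] (huw : G.Adj u w)
    (hnbr : ∀ x, G.Adj u x → x ≠ w → G.Adj x w) : localConn G u w = G.degree u := by
  classical
  refine le_antisymm (localConn_le_degree huw.ne) ?_
  have hsnd : ∀ x ∈ G.neighborFinset u, (pathThrough huw x).1.snd = x := fun x hx =>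
    snd_pathThrough huw ((G.mem_neighborFinset _ _).mp hx)
      (hnbr x ((G.mem_neighborFinset _ _).mp hx))
  have hinj : Set.InjOn (pathThrough huw) (G.neighborFinset u) := fun x hx y hy hxy => by
    rw [← hsnd x hx, ← hsnd y hy, hxy]
  rw [localConn_of_ne huw.ne]
  refine le_sSup ⟨(G.neighborFinset u).image (pathThrough huw), ?_, ?_⟩
  · simp only [InternallyDisjoint, Finset.mem_image]
    rintro _ ⟨x, hx, rfl⟩ _ ⟨y, hy, rfl⟩ hne z hzx hzy
    have hxy : x ≠ y := fun h => hne (h ▸ rfl)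
    rcases mem_support_pathThrough huw hzx with h | h | h <;>
      rcases mem_support_pathThrough huw hzy with h' | h' | h' <;>
      first | exact Or.inl h | exact Or.inr h | exact Or.inl h' | exact Or.inr h' |
        exact absurd (h.symm.trans h') hxy
  · rw [Finset.card_image_of_injOn hinj, card_neighborFinset_eq_degree]

lemma localConn_comm (u w : V) : localConn G u w = localConn G w u := by
  suffices key : ∀ u w : V, localConn G u w ≤ localConn G w u from
    le_antisymm (key u w) (key w u)
  intro u w
  rcases eq_or_ne u w with rfl | huw
  · rfl
  classical
  rw [localConn_of_ne huw, localConn_of_ne huw.symm]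
  refine sSup_le ?_
  rintro _ ⟨Ps, hPs, rfl⟩
  refine le_sSup ⟨Ps.image Path.reverse, ?_, ?_⟩
  · simp only [InternallyDisjoint, Finset.mem_image]
    rintro _ ⟨p, hp, rfl⟩ _ ⟨q, hq, rfl⟩ hne x hxp hxq
    simp only [Path.reverse_coe, Walk.support_reverse, List.mem_reverse] at hxp hxq
    exact (hPs p hp q hq (fun h => hne (h ▸ rfl)) x hxp hxq).symm
  · rw [Finset.card_image_of_injective]
    intro p q h
    exact Subtype.ext (Walk.reverse_injective (congrArg Subtype.val h))

lemma localConn_le_localConn_iso (e : G ≃g G') (u w : V) :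
    localConn G u w ≤ localConn G' (e u) (e w) := by
  rcases eq_or_ne u w with rfl | huw
  · simp [localConn_self]
  classical
  rw [localConn_of_ne huw, localConn_of_ne (e.injective.ne huw)]
  refine sSup_le ?_
  rintro _ ⟨Ps, hPs, rfl⟩
  refine le_sSup ⟨Ps.image (SimpleGraph.Path.map e.toHom e.injective), ?_, ?_⟩
  · simp only [InternallyDisjoint, Finset.mem_image]
    rintro _ ⟨p, hp, rfl⟩ _ ⟨q, hq, rfl⟩ hne x hxp hxq
    simp only [SimpleGraph.Path.map_coe, Walk.support_map, List.mem_map] at hxp hxq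
    obtain ⟨y, hy, rfl⟩ := hxp
    obtain ⟨z, hz, hzy⟩ := hxq
    obtain rfl := e.injective hzy
    rcases hPs p hp q hq (fun h => hne (h ▸ rfl)) z hy hz with rfl | rfl
    exacts [Or.inl rfl, Or.inr rfl]
  · rw [Finset.card_image_of_injective _
      (SimpleGraph.Path.map_injective (f := e.toHom) e.injective u w)]

lemma localConn_iso (e : G ≃g G') (u w : V) : localConn G' (e u) (e w) = localConn G u w :=
  le_antisymm (by simpa using localConn_le_localConn_iso e.symm (e u) (e w))
    (localConn_le_localConn_iso e u w)

end LocalConnectivity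

section Resolving

variable {V : Type*} {G : SimpleGraph V}

lemma ConnResolving.mono {W W' : Set V} (hW : ConnResolving G W) (h : W ⊆ W') :
    ConnResolving G W' :=
  fun u v huv => hW u v fun w hw => huv w (h hw)

lemma not_connResolving_of_iso {W : Set V} (e : G ≃g G) (hW : ∀ w ∈ W, e w = w) {u : V}
    (hu : e u ≠ u) : ¬ ConnResolving G W := fun hres =>
  hu (hres (e u) u fun w hw => by rw [← hW w hw, localConn_iso, hW w hw])

lemma AreTwins.adj_swap [DecidableEq V] {a b x y : V} (h : AreTwins G a b)
    (hxy : G.Adj x y) : G.Adj (Equiv.swap a b x) (Equiv.swap a b y) := by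
  have h' : ∀ z, z ≠ a → z ≠ b → (G.Adj z a ↔ G.Adj z b) := fun z hza hzb => by
    rw [G.adj_comm z, G.adj_comm z]; exact h z hza hzb
  rw [Equiv.swap_apply_def, Equiv.swap_apply_def]
  split_ifs <;> subst_vars <;> grind [G.adj_symm, G.ne_of_adj]

def AreTwins.swap [DecidableEq V] {a b : V} (h : AreTwins G a b) : G ≃g G where
  toEquiv := Equiv.swap a b
  map_rel_iff' {x y} := ⟨fun hxy => by simpa using h.adj_swap hxy, h.adj_swap⟩

lemma cdim_le {W : Set V} (hW : ConnResolving G W) : cdim G ≤ W.ncard :=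
  Nat.sInf_le ⟨W, hW, rfl⟩

lemma cdim_eq_two [Finite V] {a z : V} (haz : a ≠ z) (hpair : ConnResolving G {a, z})
    (hsingle : ∀ w, ¬ ConnResolving G {w}) : cdim G = 2 := by
  refine le_antisymm (Set.ncard_pair haz ▸ cdim_le hpair) (le_csInf ⟨_, _, hpair, rfl⟩ ?_)
  rintro _ ⟨W, hW, rfl⟩
  by_contra! hlt
  rcases (Set.ncard_le_one_iff_eq).mp (Nat.le_of_lt_succ hlt) with rfl | ⟨w, rfl⟩
  exacts [hsingle a (hW.mono (Set.empty_subset _)), hsingle w hW]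

end Resolving

section Universal

variable {V : Type*} {G : SimpleGraph V}

lemma connResolving_pair_of_forall_adj [Fintype V] [DecidableRel G.Adj] {a z : V}
    (hz : ∀ v, v ≠ z → G.Adj v z)
    (hdeg : ∀ u v, u ≠ a → u ≠ z → v ≠ a → v ≠ z → G.degree u = G.degree v → u = v) :
    ConnResolving G {a, z} := by
  intro u v h
  have hW : ∀ w ∈ ({a, z} : Set V), u = w ↔ v = w := fun w hw => by
    rw [← localConn_eq_top_iff (G := G), h w hw, localConn_eq_top_iff]
  by_cases hua : u = a
  · rw [hua, (hW a (by simp)).mp hua]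
  by_cases huz : u = z
  · rw [huz, (hW z (by simp)).mp huz]
  have hva : v ≠ a := fun hv => hua ((hW a (by simp)).mpr hv)
  have hvz : v ≠ z := fun hv => huz ((hW z (by simp)).mpr hv)
  have hκ : ∀ x, x ≠ z → localConn G x z = G.degree x := fun x hx =>
    localConn_eq_degree (hz x hx) fun y _ hy => hz y hy
  refine hdeg u v hua huz hva hvz (Nat.cast_injective (R := ℕ∞) ?_)
  rw [← hκ u huz, ← hκ v hvz, h z (by simp)]

lemma reachable_of_forall_adj {z : V} (hz : ∀ v, v ≠ z → G.Adj v z) (v : V) :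
    G.Reachable v z := by
  rcases eq_or_ne v z with rfl | hv
  exacts [.rfl, (hz v hv).reachable]

lemma connected_of_forall_adj {z : V} (hz : ∀ v, v ≠ z → G.Adj v z) : G.Connected :=
  (connected_iff_exists_forall_reachable G).mpr
    ⟨z, fun v => (reachable_of_forall_adj hz v).symm⟩

lemma dist_le_two_of_forall_adj {z : V} (hz : ∀ v, v ≠ z → G.Adj v z) (u v : V) :
    G.dist u v ≤ 2 := by
  have h : ∀ x, G.dist x z ≤ 1 := fun x => by
    rcases eq_or_ne x z with rfl | hx
    exacts [by simp, (dist_eq_one_iff_adj.mpr (hz x hx)).le]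
  calc G.dist u v ≤ G.dist u z + G.dist z v := (connected_of_forall_adj hz).dist_triangle
    _ ≤ 2 := by have := h u; have := h v; rw [dist_comm] at this; omega

end Universal

section Metric

variable {V : Type*} {G : SimpleGraph V}

lemma metricResolving_univ (hG : G.Connected) : MetricResolving G Set.univ :=
  fun u _ h => (hG.dist_eq_zero_iff.mp ((h u trivial).symm.trans (G.dist_self))).symm

/-- Outside a resolving set `W` a vertex is determined by its distances `1, …, D` to `W`. -/
lemma card_le_ncard_add_pow [Fintype V] (hG : G.Connected) {D : ℕ}
    (hD : ∀ u v, G.dist u v ≤ D) {W : Set V} (hW : MetricResolving G W) :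
    Fintype.card V ≤ W.ncard + D ^ W.ncard := by
  have hpos : ∀ u : ↥Wᶜ, ∀ w : W, 0 < G.dist u w := fun u w =>
    hG.pos_dist_of_ne fun h => u.2 (h ▸ w.2)
  let code : ↥Wᶜ → W → Fin D := fun u w =>
    ⟨G.dist u w - 1, by have := hD u w; have := hpos u w; omega⟩
  have hcode : Function.Injective code := fun u u' h => Subtype.ext <| hW _ _ fun w hw => by
    have := congrArg Fin.val (congrFun h ⟨w, hw⟩)
    have := hpos u ⟨w, hw⟩
    have := hpos u' ⟨w, hw⟩
    simp only [code] at *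
    omega
  have := Nat.card_le_card_of_injective code hcode
  rw [Nat.card_fun, Nat.card_coe_set_eq, Nat.card_coe_set_eq, Nat.card_eq_fintype_card,
    Fintype.card_fin] at this
  have := Set.ncard_add_ncard_compl W
  rw [Nat.card_eq_fintype_card] at this
  omega

lemma card_le_mdim_add_pow [Fintype V] (hG : G.Connected) {D : ℕ}
    (hD : ∀ u v, G.dist u v ≤ D) : Fintype.card V ≤ mdim G + D ^ mdim G := by
  obtain ⟨W, hW, hcard⟩ := Nat.sInf_mem (s := {n | ∃ W, MetricResolving G W ∧ W.ncard = n})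
    ⟨_, _, metricResolving_univ hG, rfl⟩
  have hmdim : mdim G = W.ncard := hcard.symm
  exact hmdim ▸ card_le_ncard_add_pow hG hD hW

end Metric

section Alternating

lemma Fin.card_filter_val_eq_count {N : ℕ} (P : ℕ → Prop) [DecidablePred P] :
    (Finset.univ.filter fun i : Fin N => P i).card = Nat.count P N := by
  rw [Nat.count_eq_card_filter_range, ← Nat.Iio_eq_range, ← Fin.map_valEmbedding_univ,
    Finset.filter_map, Finset.card_map]
  rfl

lemma count_altGraph_nbrs (n i : ℕ) :
    Nat.count (fun j => (i < j ∧ j % 2 = 1) ∨ (j < i ∧ i % 2 = 1)) (2 * n) =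
      (if i % 2 = 1 then min i (2 * n) else 0) + (n - (i + 1) / 2) := by
  induction n with
  | zero => simp
  | succ n ih =>
    rw [show 2 * (n + 1) = 2 * n + 1 + 1 by ring, Nat.count_succ, Nat.count_succ, ih]
    split_ifs <;> omega

instance (L : List Bool) : DecidableRel (thresholdGraph L).Adj := fun i j =>
  decidable_of_iff (i ≠ j ∧ ((i < j ∧ L.get j = true) ∨ (j < i ∧ L.get i = true)))
    (by rw [thresholdGraph, fromRel_adj])

lemma thresholdGraph_adj {L : List Bool} {i j : Fin L.length} :
    (thresholdGraph L).Adj i j ↔ (i < j ∧ L.get j = true) ∨ (j < i ∧ L.get i = true) := by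
  rw [thresholdGraph, fromRel_adj, and_iff_right_iff_imp]
  rintro (⟨h, -⟩ | ⟨h, -⟩)
  exacts [h.ne, h.ne']

lemma altList_length (n : ℕ) : (altList n).length = 2 * n := by
  simp [altList, mul_comm]

lemma altList_getElem (n k : ℕ) (hk : k < (altList n).length) :
    (altList n)[k] = decide (k % 2 = 1) := by
  induction n generalizing k with
  | zero => simp [altList] at hk
  | succ n ih =>
    match k with
    | 0 => rfl
    | 1 => rfl
    | k + 2 => exact (ih k (by simp [altList_length] at hk ⊢; omega)).trans (by simp)

variable {n : ℕ}

lemma altGraph_adj {i j : Fin (altList n).length} :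
    (thresholdGraph (altList n)).Adj i j ↔
      ((i : ℕ) < j ∧ (j : ℕ) % 2 = 1) ∨ ((j : ℕ) < i ∧ (i : ℕ) % 2 = 1) := by
  rw [thresholdGraph_adj, List.get_eq_getElem, List.get_eq_getElem, altList_getElem,
    altList_getElem, Fin.lt_def, Fin.lt_def]
  simp

lemma altGraph_degree (i : Fin (altList n).length) :
    (thresholdGraph (altList n)).degree i =
      if (i : ℕ) % 2 = 1 then n + i / 2 else n - i / 2 := by
  have hi : (i : ℕ) < 2 * n := altList_length n ▸ i.isLt
  rw [← card_neighborFinset_eq_degree, neighborFinset_eq_filter]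
  simp only [altGraph_adj]
  have hcount := count_altGraph_nbrs n i
  rw [← altList_length] at hcount
  rw [Fin.card_filter_val_eq_count
    fun j => ((i : ℕ) < j ∧ j % 2 = 1) ∨ (j < i ∧ (i : ℕ) % 2 = 1), hcount]
  split_ifs <;> omega

lemma altGraph_eq_of_degree_eq {u v : Fin (altList n).length} (hu : (u : ℕ) ≠ 0)
    (hv : (v : ℕ) ≠ 0)
    (h : (thresholdGraph (altList n)).degree u = (thresholdGraph (altList n)).degree v) :
    u = v := by
  have hu' : (u : ℕ) < 2 * n := altList_length n ▸ u.isLt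
  have hv' : (v : ℕ) < 2 * n := altList_length n ▸ v.isLt
  rw [altGraph_degree, altGraph_degree] at h
  ext
  split_ifs at h <;> omega

lemma altGraph_adj_of_val_eq {u z : Fin (altList n).length} (hz : (z : ℕ) = 2 * n - 1)
    (hu : u ≠ z) : (thresholdGraph (altList n)).Adj u z := by
  have hu' : (u : ℕ) < 2 * n := altList_length n ▸ u.isLt
  have := Fin.val_ne_of_ne hu
  rw [altGraph_adj]
  omega

lemma altGraph_areTwins {a b : Fin (altList n).length} (ha : (a : ℕ) = 0) (hb : (b : ℕ) = 1) :
    AreTwins (thresholdGraph (altList n)) a b := fun x hxa hxb => by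
  have := Fin.val_ne_of_ne hxa
  have := Fin.val_ne_of_ne hxb
  rw [altGraph_adj, altGraph_adj]
  omega

/-- Every neighbour of `0` or `1` other than an odd `k > 1` is adjacent to `k`. -/
lemma altGraph_localConn_eq_degree {w k : Fin (altList n).length} (hw : (w : ℕ) ≤ 1)
    (hk : (k : ℕ) % 2 = 1) (hk1 : 1 < (k : ℕ)) :
    localConn (thresholdGraph (altList n)) k w = (thresholdGraph (altList n)).degree w := by
  rw [localConn_comm]
  refine localConn_eq_degree (altGraph_adj.mpr (by omega)) fun x hwx hxk => ?_
  have := Fin.val_ne_of_ne hxk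
  rw [altGraph_adj] at hwx ⊢
  omega

lemma cdim_altGraph (hn : 3 ≤ n) : cdim (thresholdGraph (altList n)) = 2 := by
  have hL := altList_length n
  let vtx (k : ℕ) (hk : k < 2 * n) : Fin (altList n).length := ⟨k, hL ▸ hk⟩
  refine cdim_eq_two (a := vtx 0 (by omega)) (z := vtx (2 * n - 1) (by omega))
    (fun h => by simp [vtx, Fin.ext_iff] at h; omega) ?_ fun w hres => ?_
  · refine connResolving_pair_of_forall_adj (fun u hu => altGraph_adj_of_val_eq rfl hu)
      fun u v hu _ hv _ h => altGraph_eq_of_degree_eq ?_ ?_ h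
    exacts [fun h => hu (Fin.ext h), fun h => hv (Fin.ext h)]
  by_cases hw : (w : ℕ) ≤ 1
  · have h35 := hres (vtx 3 (by omega)) (vtx 5 (by omega)) fun w' hw' => by
      rw [Set.mem_singleton_iff.mp hw',
        altGraph_localConn_eq_degree hw (by simp [vtx]) (by simp [vtx]),
        altGraph_localConn_eq_degree hw (by simp [vtx]) (by simp [vtx])]
    simp [vtx, Fin.ext_iff] at h35
  · classical
    let e := (altGraph_areTwins (a := vtx 0 (by omega)) (b := vtx 1 (by omega)) rfl rfl).swap
    refine not_connResolving_of_iso e (fun w' hw' => ?_) (u := vtx 0 (by omega)) ?_ hres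
    · rw [Set.mem_singleton_iff.mp hw']
      exact Equiv.swap_apply_of_ne_of_ne (fun h => hw (by simp [h, vtx]))
        (fun h => hw (by simp [h, vtx]))
    · simp [e, AreTwins.swap, vtx, Fin.ext_iff]

lemma exists_forall_adj_altGraph (hn : 1 ≤ n) :
    ∃ z, ∀ u, u ≠ z → (thresholdGraph (altList n)).Adj u z :=
  ⟨⟨2 * n - 1, by rw [altList_length]; omega⟩, fun _ hu => altGraph_adj_of_val_eq rfl hu⟩

lemma altGraph_connected (hn : 1 ≤ n) : (thresholdGraph (altList n)).Connected :=
  connected_of_forall_adj (exists_forall_adj_altGraph hn).choose_spec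

lemma length_le_mdim_altGraph (hn : 1 ≤ n) :
    (altList n).length ≤
      mdim (thresholdGraph (altList n)) + 2 ^ mdim (thresholdGraph (altList n)) := by
  obtain ⟨z, hz⟩ := exists_forall_adj_altGraph hn
  simpa using card_le_mdim_add_pow (connected_of_forall_adj hz) (dist_le_two_of_forall_adj hz)

end Alternating

/-- for every `ε > 0` there is a connected graph `G` with
`cdim G / mdim G ≤ ε`; concretely the alternating threshold graph of order `2n ≥ 3` has
connectivity dimension `2` and metric dimension `m` with `m + 2^m ≥ 2n`. -/
theorem stmt8 :
    ∀ ε : ℝ, 0 < ε → ∃ n : ℕ,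
      (altList n).length = 2 * n ∧ 3 ≤ (altList n).length ∧
      (thresholdGraph (altList n)).Connected ∧
      cdim (thresholdGraph (altList n)) = 2 ∧
      (altList n).length ≤
        mdim (thresholdGraph (altList n)) + 2 ^ mdim (thresholdGraph (altList n)) ∧
      (cdim (thresholdGraph (altList n)) : ℝ) / (mdim (thresholdGraph (altList n)) : ℝ)
        ≤ ε := by
  intro ε hε
  obtain ⟨K, hK⟩ := exists_nat_ge (2 / ε)
  have hpow : 1 ≤ 2 ^ K := Nat.one_le_two_pow
  have hcdim := cdim_altGraph (n := K + 2 ^ K + 3) (by omega)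
  have hmdim := length_le_mdim_altGraph (n := K + 2 ^ K + 3) (by omega)
  refine ⟨K + 2 ^ K + 3, altList_length _, by rw [altList_length]; omega,
    altGraph_connected (by omega), hcdim, hmdim, ?_⟩
  set m := mdim (thresholdGraph (altList (K + 2 ^ K + 3)))
  have hKm : K < m := by
    by_contra! h
    have := Nat.pow_le_pow_right two_pos h
    rw [altList_length] at hmdim
    omega
  have hm : (K : ℝ) < m := by exact_mod_cast hKm
  rw [hcdim, Nat.cast_ofNat, div_le_iff₀ (by linarith [K.cast_nonneg (α := ℝ)])]
  nlinarith [(div_le_iff₀ hε).mp hK]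

end ConnDim
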